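/- Let (X,Y,Z) : [η0,η1] → ℝ³ be a solution of the system (S) with X(η) > 0 for all η ∈ [η0,η1]. If Y(η0) < 0 and X(η0) < Z(η0), then Y(η) < 0 and X(η) < Z(η) for every η ∈ [η0,η1]. -/

import Mathlib

open Real Set Filter Topology

/-- The self-similar exponent `α = (σ+2)/((σ-2)(m-1))`. -/
noncomputable def ssAlpha (m σ : ℝ) : ℝ := (σ + 2) / ((σ - 2) * (m - 1))

/-- The self-similar exponent `β = 2/(σ-2)`. -/
noncomputable def ssBeta (σ : ℝ) : ℝ := 2 / (σ - 2)

/-- `(X,Y,Z)` satisfies the quadratic system (S) at time `η`: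
`X' = X((m−1)Y − 2X)`, `Y' = −Y² − (β/α)Y + X − XY − Z`, `Z' = (σ−2)XZ`. -/
def SysAt (m σ : ℝ) (X Y Z : ℝ → ℝ) (η : ℝ) : Prop :=
  HasDerivAt X (X η * ((m - 1) * Y η - 2 * X η)) η ∧
  HasDerivAt Y (-(Y η) ^ 2 - ssBeta σ / ssAlpha m σ * Y η + X η - X η * Y η - Z η) η ∧
  HasDerivAt Z ((σ - 2) * X η * Z η) η

/-- The equilibrium `P0^λ = (0, λ, −λ² − (β/α)λ)` on the critical parabola. -/
noncomputable def P0pt (m σ l : ℝ) : ℝ × ℝ × ℝ :=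
  (0, l, -l ^ 2 - ssBeta σ / ssAlpha m σ * l)

/-- The equilibrium `P2 = ((m−1)/(2(m+1)α), 1/((m+1)α), 0)`. -/
noncomputable def P2pt (m σ : ℝ) : ℝ × ℝ × ℝ :=
  ((m - 1) / (2 * (m + 1) * ssAlpha m σ), 1 / ((m + 1) * ssAlpha m σ), 0)

/-!
Both conditions are strict inequalities `Y < 0` and `X - Z < 0` between continuous functions,
so a solution leaving the region does so at a first time `τ`, where one of `Y`, `X - Z` reaches
`0` from below and therefore has nonnegative derivative. But the field points strictly inwards
on the boundary of the region: if `X = Z` then `(X - Z)' = X((m - 1)Y - σX) < 0` because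
`Y ≤ 0 < X`, and otherwise `Y = 0` and `Y' = X - Z < 0`.
-/

theorem HasDerivWithinAt.nonneg_of_isMaxOn_Icc_right {f : ℝ → ℝ} {f' a b : ℝ} (hab : a < b)
    (hf : HasDerivWithinAt f f' (Icc a b) b) (hmax : IsMaxOn f (Icc a b) b) : 0 ≤ f' := by
  have hcone : a - b ∈ posTangentConeAt (Icc a b) b :=
    sub_mem_posTangentConeAt_of_segment_subset (by rw [segment_symm, segment_eq_Icc hab.le])
  have hnonpos : (a - b) * f' ≤ 0 := by
    simpa using hmax.localize.hasFDerivWithinAt_nonpos hf.hasFDerivWithinAt hcone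
  nlinarith

theorem forall_neg_of_deriv_neg_at_boundary {ι : Type*} [Finite ι] {a b : ℝ}
    {g g' : ι → ℝ → ℝ}
    (hg : ∀ i, ∀ t ∈ Icc a b, HasDerivWithinAt (g i) (g' i t) (Icc a b) t)
    (ha : ∀ i, g i a < 0)
    (hexit : ∀ t ∈ Ioc a b, (∀ i, g i t ≤ 0) → (∃ i, g i t = 0) →
      ∃ i, g i t = 0 ∧ g' i t < 0) :
    ∀ t ∈ Icc a b, ∀ i, g i t < 0 := by
  by_contra! ⟨t, ht, i, hi⟩
  set B := ⋃ i, Icc a b ∩ g i ⁻¹' Ici 0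
  have hB_closed : IsClosed B := isClosed_iUnion_of_finite fun i =>
    ContinuousOn.preimage_isClosed_of_isClosed (fun t ht => (hg i t ht).continuousWithinAt)
      isClosed_Icc isClosed_Ici
  have hB_bdd : BddBelow B := ⟨a, fun s hs => by obtain ⟨_, hs, -⟩ := mem_iUnion.1 hs; exact hs.1⟩
  set τ := sInf B
  obtain ⟨j, hτ, hjτ⟩ := mem_iUnion.1 (hB_closed.csInf_mem ⟨t, mem_iUnion.2 ⟨i, ht, hi⟩⟩ hB_bdd)
  have hbefore : ∀ s ∈ Ico a τ, ∀ i, g i s < 0 := fun s hs i => not_le.1 fun h =>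
    hs.2.not_ge (csInf_le hB_bdd (mem_iUnion.2 ⟨i, ⟨hs.1, hs.2.le.trans hτ.2⟩, h⟩))
  have haτ : a < τ := hτ.1.lt_of_ne fun h => (ha j).not_ge (h ▸ hjτ)
  have hIco : Ico a τ ⊆ Icc a b := fun s hs => ⟨hs.1, hs.2.le.trans hτ.2⟩
  have hle : ∀ i, g i τ ≤ 0 := fun i =>
    ContinuousWithinAt.closure_le (by simp [closure_Ico haτ.ne, haτ.le])
      ((hg i τ hτ).continuousWithinAt.mono hIco) continuousWithinAt_const
      fun s hs => (hbefore s hs i).le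
  obtain ⟨k, hk0, hk'⟩ := hexit τ ⟨haτ, hτ.2⟩ hle ⟨j, le_antisymm (hle j) hjτ⟩
  have hmax : IsMaxOn (g k) (Icc a τ) τ := isMaxOn_iff.2 fun s hs => by
    rcases hs.2.lt_or_eq with hsτ | rfl
    · exact (hbefore s ⟨hs.1, hsτ⟩ k).le.trans hk0.ge
    · exact le_rfl
  have := ((hg k τ hτ).mono (Icc_subset_Icc_right hτ.2)).nonneg_of_isMaxOn_Icc_right haτ hmax
  linarith

theorem sysS_field_points_inward {m σ c x y z : ℝ} (hm1 : 1 < m) (hσ : 0 < σ) (hx : 0 < x)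
    (hy : y ≤ 0) (hxz : x - z ≤ 0) (hboundary : y = 0 ∨ x - z = 0) :
    y = 0 ∧ -y ^ 2 - c * y + x - x * y - z < 0 ∨
      x - z = 0 ∧ x * ((m - 1) * y - 2 * x) - (σ - 2) * x * z < 0 := by
  rcases hxz.lt_or_eq with hxz | hxz
  · have hy0 : y = 0 := hboundary.resolve_right hxz.ne
    refine .inl ⟨hy0, ?_⟩
    rw [hy0]
    linarith
  · refine .inr ⟨hxz, ?_⟩
    rw [← sub_eq_zero.1 hxz]
    nlinarith [mul_nonpos_of_nonneg_of_nonpos hx.le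
      (mul_nonpos_of_nonneg_of_nonpos (sub_pos.2 hm1).le hy), mul_pos hx hx]

theorem Y_neg_and_X_lt_Z_invariant_general
    (m σ : ℝ) (hm1 : 1 < m) (hσ : 2 < σ)
    (η0 η1 : ℝ) (X Y Z : ℝ → ℝ)
    (hsol : ∀ η ∈ Icc η0 η1,
      HasDerivWithinAt X (X η * ((m - 1) * Y η - 2 * X η)) (Icc η0 η1) η ∧
      HasDerivWithinAt Y
        (-(Y η) ^ 2 - ssBeta σ / ssAlpha m σ * Y η + X η - X η * Y η - Z η)
        (Icc η0 η1) η ∧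
      HasDerivWithinAt Z ((σ - 2) * X η * Z η) (Icc η0 η1) η)
    (hX : ∀ η ∈ Icc η0 η1, 0 < X η)
    (hY0 : Y η0 < 0) (hXZ0 : X η0 < Z η0) :
    ∀ η ∈ Icc η0 η1, Y η < 0 ∧ X η < Z η := by
  have key := forall_neg_of_deriv_neg_at_boundary (g := ![Y, X - Z])
    (g' := ![fun η => -(Y η) ^ 2 - ssBeta σ / ssAlpha m σ * Y η + X η - X η * Y η - Z η,
      fun η => X η * ((m - 1) * Y η - 2 * X η) - (σ - 2) * X η * Z η])
    (by
      intro i η hη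
      fin_cases i
      · exact (hsol η hη).2.1
      · exact (hsol η hη).1.sub (hsol η hη).2.2)
    (by simp [Fin.forall_fin_two, hY0, hXZ0])
    (by
      intro η hη hle hzero
      simp only [Fin.forall_fin_two, Fin.exists_fin_two, Matrix.cons_val_zero,
        Matrix.cons_val_one, Pi.sub_apply] at hle hzero ⊢
      exact sysS_field_points_inward hm1 (by linarith) (hX η (Ioc_subset_Icc_self hη))
        hle.1 hle.2 hzero)
  intro η hη
  have hneg := key η hη
  simp only [Fin.forall_fin_two, Matrix.cons_val_zero, Matrix.cons_val_one, Pi.sub_apply]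
    at hneg
  exact ⟨hneg.1, sub_neg.1 hneg.2⟩

/-- along a solution of (S) with `X > 0`, the conditions `Y < 0` and
`X < Z` are preserved forward in time. -/
theorem Y_neg_and_X_lt_Z_invariant
    (m σ : ℝ) (hm1 : 1 < m) (hm2 : m < 2) (hσ : 2 < σ)
    (η0 η1 : ℝ) (hη : η0 ≤ η1) (X Y Z : ℝ → ℝ)
    (hsol : ∀ η ∈ Icc η0 η1,
      HasDerivWithinAt X (X η * ((m - 1) * Y η - 2 * X η)) (Icc η0 η1) η ∧
      HasDerivWithinAt Y
        (-(Y η) ^ 2 - ssBeta σ / ssAlpha m σ * Y η + X η - X η * Y η - Z η)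
        (Icc η0 η1) η ∧
      HasDerivWithinAt Z ((σ - 2) * X η * Z η) (Icc η0 η1) η)
    (hX : ∀ η ∈ Icc η0 η1, 0 < X η)
    (hY0 : Y η0 < 0) (hXZ0 : X η0 < Z η0) :
    ∀ η ∈ Icc η0 η1, Y η < 0 ∧ X η < Z η :=
  Y_neg_and_X_lt_Z_invariant_general m σ hm1 hσ η0 η1 X Y Z hsol hX hY0 hXZ0
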